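/- arXiv:2406.12318 — 5 statements merged into one kernel-verified Lean document; each statement's English description precedes it below -/
import Mathlib

section
/- The eigenvalue λ₁(ρ, υ) = υ - ρ p'(ρ), restricted to the integral curve υ + p(ρ) = const, is strictly decreasing in ρ: its derivative along the curve equals -(Γ² + Γ)Aρ^(Γ-1)/(1-aρ)^(Γ+2) + (κ² - κ)B/ρ^(κ+1), which is negative for all ρ ∈ (0, 1/a). -/
open Real

/-!
Along the curve, `λ₁ = C - p - ρ p'`, so `λ₁' = -2 p' - ρ p''`. Writing `s = 1 - aρ`, the
identity `s + aρ = 1` collapses the `A`-terms of `-2 p' - ρ p''` to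
`-(Γ² + Γ) A ρ^(Γ-1) / s^(Γ+2)`, while the `B`-terms give `(κ² - κ) B / ρ^(κ+1)`. The first is
negative since `Γ > 0` and the second is nonpositive since `0 ≤ κ ≤ 1`.
-/

section
variable {A B a Γ κ x : ℝ}

theorem hasDerivAt_rpow_div_one_sub_mul_rpow (α β : ℝ) (hx : 0 < x) (hs : 0 < 1 - a * x) :
    HasDerivAt (fun y => y ^ α / (1 - a * y) ^ β)
      ((α * (1 - a * x) + a * β * x) * x ^ (α - 1) / (1 - a * x) ^ (β + 1)) x := by
  have hnum : HasDerivAt (fun y => y ^ α) (α * x ^ (α - 1)) x :=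
    hasDerivAt_rpow_const (Or.inl hx.ne')
  have hden : HasDerivAt (fun y => (1 - a * y) ^ β) (-a * β * (1 - a * x) ^ (β - 1)) x := by
    have hlin : HasDerivAt (fun y => 1 - a * y) (-a) x := by
      simpa using ((hasDerivAt_id x).const_mul a).const_sub 1
    exact hlin.rpow_const (Or.inl hs.ne')
  refine (hnum.div hden (rpow_pos_of_pos hs β).ne').congr_deriv ?_
  have hX := rpow_pos_of_pos hx (α - 1)
  have hS := rpow_pos_of_pos hs (β - 1)
  rw [show x ^ α = x ^ (α - 1) * x by rw [← rpow_add_one hx.ne']; ring_nf,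
    show (1 - a * x) ^ β = (1 - a * x) ^ (β - 1) * (1 - a * x) by
      rw [← rpow_add_one hs.ne']; ring_nf,
    show (1 - a * x) ^ (β + 1) = (1 - a * x) ^ (β - 1) * (1 - a * x) * (1 - a * x) by
      rw [← rpow_add_one hs.ne', ← rpow_add_one hs.ne']; ring_nf]
  field_simp
  ring

theorem hasDerivAt_const_div_rpow (c β : ℝ) (hx : 0 < x) :
    HasDerivAt (fun y => c / y ^ β) (-(c * β) / x ^ (β + 1)) x := by
  refine ((hasDerivAt_const x c).div (hasDerivAt_rpow_const (p := β) (Or.inl hx.ne'))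
    (rpow_pos_of_pos hx β).ne').congr_deriv ?_
  have hX := rpow_pos_of_pos hx (β - 1)
  rw [show x ^ β = x ^ (β - 1) * x by rw [← rpow_add_one hx.ne']; ring_nf,
    show x ^ (β + 1) = x ^ (β - 1) * x * x by
      rw [← rpow_add_one hx.ne', ← rpow_add_one hx.ne']; ring_nf]
  field_simp
  ring

theorem hasDerivAt_pressure (hx : 0 < x) (hs : 0 < 1 - a * x) :
    HasDerivAt (fun y => A * (y / (1 - a * y)) ^ Γ - B / y ^ κ)
      (Γ * A * x ^ (Γ - 1) / (1 - a * x) ^ (Γ + 1) + κ * B / x ^ (κ + 1)) x := by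
  have hratio : HasDerivAt (fun y => y / (1 - a * y)) (1 / (1 - a * x) ^ 2) x := by
    have h := hasDerivAt_rpow_div_one_sub_mul_rpow (a := a) 1 1 hx hs
    simp only [rpow_one, sub_self, rpow_zero] at h
    refine h.congr_deriv ?_
    norm_num
  refine (((hratio.rpow_const (p := Γ) (Or.inl (div_pos hx hs).ne')).const_mul A).sub
    (hasDerivAt_const_div_rpow B κ hx)).congr_deriv ?_
  have hX := rpow_pos_of_pos hx (Γ - 1)
  have hS := rpow_pos_of_pos hs (Γ - 1)
  rw [div_rpow hx.le hs.le,
    show (1 - a * x) ^ (Γ + 1) = (1 - a * x) ^ (Γ - 1) * (1 - a * x) ^ 2 by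
      rw [← rpow_natCast, ← rpow_add hs]; norm_num; ring_nf]
  field_simp
  ring

theorem hasDerivAt_pressure_deriv (hx : 0 < x) (hs : 0 < 1 - a * x) :
    HasDerivAt (fun y => Γ * A * y ^ (Γ - 1) / (1 - a * y) ^ (Γ + 1) + κ * B / y ^ (κ + 1))
      (Γ * A * (((Γ - 1) * (1 - a * x) + a * (Γ + 1) * x) * x ^ (Γ - 1 - 1) /
          (1 - a * x) ^ (Γ + 1 + 1)) - κ * B * (κ + 1) / x ^ (κ + 1 + 1)) x := by
  have h := ((hasDerivAt_rpow_div_one_sub_mul_rpow (Γ - 1) (Γ + 1) hx hs).const_mul (Γ * A)).add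
    (hasDerivAt_const_div_rpow (κ * B) (κ + 1) hx)
  simp only [mul_div_assoc] at h ⊢
  refine h.congr_deriv ?_
  ring

theorem hasDerivAt_lambda1 (C : ℝ) (hx : 0 < x) (hs : 0 < 1 - a * x) :
    HasDerivAt (fun y => (C - (A * (y / (1 - a * y)) ^ Γ - B / y ^ κ)) -
        y * (Γ * A * y ^ (Γ - 1) / (1 - a * y) ^ (Γ + 1) + κ * B / y ^ (κ + 1)))
      (-((Γ ^ 2 + Γ) * A * x ^ (Γ - 1) / (1 - a * x) ^ (Γ + 2)) +
        (κ ^ 2 - κ) * B / x ^ (κ + 1)) x := by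
  refine (((hasDerivAt_const x C).sub (hasDerivAt_pressure hx hs)).sub
    ((hasDerivAt_id x).mul (hasDerivAt_pressure_deriv hx hs))).congr_deriv ?_
  have hS := rpow_pos_of_pos hs (Γ + 1)
  have hK := rpow_pos_of_pos hx (κ + 1)
  rw [show x ^ (Γ - 1) = x ^ (Γ - 1 - 1) * x by rw [← rpow_add_one hx.ne']; ring_nf,
    show Γ + 2 = Γ + 1 + 1 by ring, rpow_add_one hs.ne' (Γ + 1), rpow_add_one hx.ne' (κ + 1)]
  simp only [id]
  have hs' : 1 - x * a ≠ 0 := by rw [mul_comm]; exact hs.ne'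
  field_simp
  ring

theorem lambda1_deriv_neg (hA : 0 < A) (hB : 0 < B) (hΓ : 0 < Γ) (hκ₀ : 0 ≤ κ) (hκ₁ : κ ≤ 1)
    (hx : 0 < x) (hs : 0 < 1 - a * x) :
    -((Γ ^ 2 + Γ) * A * x ^ (Γ - 1) / (1 - a * x) ^ (Γ + 2)) +
      (κ ^ 2 - κ) * B / x ^ (κ + 1) < 0 := by
  have hΓterm : 0 < (Γ ^ 2 + Γ) * A * x ^ (Γ - 1) / (1 - a * x) ^ (Γ + 2) := by positivity
  have hκterm : (κ ^ 2 - κ) * B / x ^ (κ + 1) ≤ 0 :=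
    div_nonpos_of_nonpos_of_nonneg (mul_nonpos_of_nonpos_of_nonneg (by nlinarith) hB.le)
      (by positivity)
  linarith

end

theorem lambda1_genuinely_nonlinear
    (A B a Γ κ C : ℝ) (hA : 0 < A) (hB : 0 < B) (ha : 0 < a)
    (hΓ : 1 ≤ Γ ∧ Γ ≤ 3) (hκ : 0 < κ ∧ κ ≤ 1)
    (p p' : ℝ → ℝ)
    (hp : ∀ ρ : ℝ, p ρ = A * (ρ / (1 - a * ρ)) ^ Γ - B / ρ ^ κ)
    (hp' : ∀ ρ : ℝ, p' ρ = Γ * A * ρ ^ (Γ - 1) / (1 - a * ρ) ^ (Γ + 1) + κ * B / ρ ^ (κ + 1))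
    (ρ : ℝ) (hρ : 0 < ρ) (hρa : ρ < 1 / a) :
    HasDerivAt (fun ρ : ℝ => (C - p ρ) - ρ * p' ρ)
      (-((Γ ^ 2 + Γ) * A * ρ ^ (Γ - 1) / (1 - a * ρ) ^ (Γ + 2)) + (κ ^ 2 - κ) * B / ρ ^ (κ + 1)) ρ ∧
    -((Γ ^ 2 + Γ) * A * ρ ^ (Γ - 1) / (1 - a * ρ) ^ (Γ + 2)) + (κ ^ 2 - κ) * B / ρ ^ (κ + 1) < 0 := by
  have hs : 0 < 1 - a * ρ := by
    rw [lt_div_iff₀ ha] at hρa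
    linarith
  obtain rfl : p = _ := funext hp
  obtain rfl : p' = _ := funext hp'
  exact ⟨hasDerivAt_lambda1 C hρ hs,
    lambda1_deriv_neg hA hB (by linarith [hΓ.1]) hκ.1.le hκ.2 hρ hs⟩
end

section
/- If the Rankine–Hugoniot relations σ(ρ_l - ρ_r) = ρ_l υ_l - ρ_r υ_r and σ(ρ_l w_l - ρ_r w_r) = ρ_l υ_l w_l - ρ_r υ_r w_r hold with w = υ + p, and ρ_l, ρ_r > 0 with ρ_l ≠ ρ_r, then either w_l = w_r (shock/rarefaction branch) or υ_l = υ_r = σ (contact discontinuity). -/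
theorem RH_dichotomy
    (ρl ρr υl υr pl pr σ : ℝ) (hρl : 0 < ρl) (hρr : 0 < ρr) (hne : ρl ≠ ρr)
    (wl wr : ℝ) (hwl : wl = υl + pl) (hwr : wr = υr + pr)
    (hRH1 : σ * (ρl - ρr) = ρl * υl - ρr * υr)
    (hRH2 : σ * (ρl * wl - ρr * wr) = ρl * υl * wl - ρr * υr * wr) :
    wl = wr ∨ (υl = υr ∧ υr = σ) := by
  have hab : ρl * (υl - σ) = ρr * (υr - σ) := by linear_combination -hRH1
  have hmul : ρl * (υl - σ) * (wl - wr) = 0 := by linear_combination -hRH2 + wr * hRH1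
  rcases mul_eq_zero.mp hmul with h | h
  · right
    have h1 : υl - σ = 0 := by
      rcases mul_eq_zero.mp h with h' | h'
      · exact absurd h' (ne_of_gt hρl)
      · exact h'
    have h2 : υr - σ = 0 := by
      have : ρr * (υr - σ) = 0 := by rw [← hab]; exact h
      rcases mul_eq_zero.mp this with h' | h'
      · exact absurd h' (ne_of_gt hρr)
      · exact h'
    constructor <;> linarith
  · left; linarith
end

section
/- Under the hypotheses of the delta-shock case (υ_r ≤ υ_l - B/ρ_l^κ), the limit lim_{(a,A)→(0,0)} A(ρ_*/(1 - a ρ_*))^Γ = υ_l - υ_r - B/ρ_l^κ holds, where ρ_* = ρ_*(a,A) solves υ_r = -p(ρ_*) + υ_l + p(ρ_l) and ρ_* → ∞. -/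
open Real Set Filter

theorem elastic_pressure_limit
    (B Γ κ ρl υl υr : ℝ) (hB : 0 < B) (hΓ : 1 ≤ Γ ∧ Γ ≤ 3) (hκ : 0 < κ ∧ κ ≤ 1)
    (hρl : 0 < ρl) (hδ : υr ≤ υl - B / ρl ^ κ)
    (p : ℝ → ℝ → ℝ → ℝ)
    (hp : ∀ a A ρ : ℝ, p a A ρ = A * (ρ / (1 - a * ρ)) ^ Γ - B / ρ ^ κ)
    (ρs : ℝ × ℝ → ℝ)
    (hρs : ∀ q : ℝ × ℝ, 0 < q.1 → 0 < q.2 →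
      ρl < ρs q ∧ ρs q < 1 / q.1 ∧ υr = -p q.1 q.2 (ρs q) + υl + p q.1 q.2 ρl)
    (hblow : Tendsto ρs (nhdsWithin (0, 0) {q : ℝ × ℝ | 0 < q.1 ∧ 0 < q.2}) atTop) :
    Tendsto (fun q : ℝ × ℝ => q.2 * (ρs q / (1 - q.1 * ρs q)) ^ Γ)
      (nhdsWithin (0, 0) {q : ℝ × ℝ | 0 < q.1 ∧ 0 < q.2})
      (nhds (υl - υr - B / ρl ^ κ)) := by
  set L := nhdsWithin ((0 : ℝ), (0 : ℝ)) {q : ℝ × ℝ | 0 < q.1 ∧ 0 < q.2}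
  -- limit of B / (ρs q) ^ κ is 0
  have h1 : Tendsto (fun q : ℝ × ℝ => B / (ρs q) ^ κ) L (nhds 0) :=
    tendsto_const_nhds.div_atTop ((tendsto_rpow_atTop hκ.1).comp hblow)
  -- limit of q.2 is 0
  have hA : Tendsto (fun q : ℝ × ℝ => q.2) L (nhds 0) :=
    (continuous_snd.tendsto _).mono_left nhdsWithin_le_nhds
  -- limit of (ρl / (1 - q.1 * ρl)) ^ Γ
  have hbase : Tendsto (fun q : ℝ × ℝ => (ρl / (1 - q.1 * ρl)) ^ Γ) L
      (nhds ((ρl / (1 - 0 * ρl)) ^ Γ)) := by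
    have hc : ContinuousAt (fun q : ℝ × ℝ => (ρl / (1 - q.1 * ρl)) ^ Γ) (0, 0) := by
      apply ContinuousAt.rpow_const
      · exact (continuousAt_const.div
          (continuousAt_const.sub ((continuousAt_fst).mul continuousAt_const))
          (by norm_num))
      · left; simp; positivity
    exact hc.tendsto.mono_left nhdsWithin_le_nhds
  have h2 : Tendsto (fun q : ℝ × ℝ => q.2 * (ρl / (1 - q.1 * ρl)) ^ Γ) L (nhds 0) := by
    simpa using hA.mul hbase
  have hsum : Tendsto (fun q : ℝ × ℝ =>
      (υl - υr - B / ρl ^ κ) + B / (ρs q) ^ κ + q.2 * (ρl / (1 - q.1 * ρl)) ^ Γ) L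
      (nhds (υl - υr - B / ρl ^ κ)) := by
    have := ((tendsto_const_nhds (x := υl - υr - B / ρl ^ κ)).add h1).add h2
    simpa using this
  refine hsum.congr' ?_
  filter_upwards [self_mem_nhdsWithin] with q hq
  obtain ⟨h1', h2', heq⟩ := hρs q hq.1 hq.2
  rw [hp, hp] at heq
  linarith [heq]
end

section
/- In the delta-shock limit, the shock speed σ₁ = υ_l - ρ_*(p_* - p_l)/(ρ_* - ρ_l) converges to υ_r as (a, A) → (0, 0), where p_* = p(ρ_*), p_l = p(ρ_l), and ρ_* is the intermediate density. Hence σ₁ and the contact speed σ₂ = υ_r coincide in the limit. -/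
/-!
The Rankine–Hugoniot relation defining `ρ_*` says exactly that `p(ρ_*) - p(ρ_l) = υ_l - υ_r`,
so `σ₁ = υ_l - (υ_l - υ_r) · ρ_* / (ρ_* - ρ_l)`, and `ρ_* / (ρ_* - ρ_l) → 1` because `ρ_* → ∞`.
-/

open Real Set Filter Topology

theorem tendsto_div_sub_const_atTop (c : ℝ) :
    Tendsto (fun x : ℝ => x / (x - c)) atTop (𝓝 1) := by
  have hsmall : Tendsto (fun x : ℝ => c / (x - c)) atTop (𝓝 0) :=
    tendsto_const_nhds.div_atTop (tendsto_atTop_add_const_right _ _ tendsto_id)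
  have hone : Tendsto (fun x : ℝ => 1 + c / (x - c)) atTop (𝓝 1) := by
    simpa using hsmall.const_add 1
  refine hone.congr' ?_
  filter_upwards [eventually_gt_atTop c] with x hx
  have hne : x - c ≠ 0 := sub_ne_zero.mpr hx.ne'
  field_simp
  ring

theorem Filter.Tendsto.sub_mul_div_sub_const {α : Type*} {l : Filter α} {f : α → ℝ}
    (hf : Tendsto f l atTop) (u d c : ℝ) :
    Tendsto (fun x => u - f x * d / (f x - c)) l (𝓝 (u - d)) := by
  have h := ((tendsto_div_sub_const_atTop c).comp hf).const_mul d |>.const_sub u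
  rw [mul_one] at h
  refine h.congr fun x => ?_
  simp only [Function.comp_apply]
  ring

theorem shock_speed_limit_general
    (ρl υl υr : ℝ)
    (p : ℝ → ℝ → ℝ → ℝ)
    (ρs : ℝ × ℝ → ℝ)
    (hρs : ∀ q : ℝ × ℝ, 0 < q.1 → 0 < q.2 →
      ρl < ρs q ∧ ρs q < 1 / q.1 ∧ υr = -p q.1 q.2 (ρs q) + υl + p q.1 q.2 ρl)
    (hblow : Tendsto ρs (nhdsWithin (0, 0) {q : ℝ × ℝ | 0 < q.1 ∧ 0 < q.2}) atTop) :
    Tendsto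
      (fun q : ℝ × ℝ =>
        υl - ρs q * (p q.1 q.2 (ρs q) - p q.1 q.2 ρl) / (ρs q - ρl))
      (nhdsWithin (0, 0) {q : ℝ × ℝ | 0 < q.1 ∧ 0 < q.2}) (nhds υr) := by
  have hlim := hblow.sub_mul_div_sub_const υl (υl - υr) ρl
  rw [sub_sub_cancel] at hlim
  refine hlim.congr' ?_
  filter_upwards [self_mem_nhdsWithin] with q ⟨ha, hA⟩
  have hjump : p q.1 q.2 (ρs q) - p q.1 q.2 ρl = υl - υr := by linarith [(hρs q ha hA).2.2]
  rw [hjump]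

theorem shock_speed_limit
    (B Γ κ ρl υl υr : ℝ) (hB : 0 < B) (hΓ : 1 ≤ Γ ∧ Γ ≤ 3) (hκ : 0 < κ ∧ κ ≤ 1)
    (hρl : 0 < ρl) (hδ : υr ≤ υl - B / ρl ^ κ)
    (p : ℝ → ℝ → ℝ → ℝ)
    (hp : ∀ a A ρ : ℝ, p a A ρ = A * (ρ / (1 - a * ρ)) ^ Γ - B / ρ ^ κ)
    (ρs : ℝ × ℝ → ℝ)
    (hρs : ∀ q : ℝ × ℝ, 0 < q.1 → 0 < q.2 →
      ρl < ρs q ∧ ρs q < 1 / q.1 ∧ υr = -p q.1 q.2 (ρs q) + υl + p q.1 q.2 ρl)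
    (hblow : Tendsto ρs (nhdsWithin (0, 0) {q : ℝ × ℝ | 0 < q.1 ∧ 0 < q.2}) atTop)
    (hAlim : Tendsto (fun q : ℝ × ℝ => q.2 * (ρs q / (1 - q.1 * ρs q)) ^ Γ)
      (nhdsWithin (0, 0) {q : ℝ × ℝ | 0 < q.1 ∧ 0 < q.2}) (nhds (υl - υr - B / ρl ^ κ)))
    (hBlim : Tendsto (fun q : ℝ × ℝ => B / ρs q ^ κ)
      (nhdsWithin (0, 0) {q : ℝ × ℝ | 0 < q.1 ∧ 0 < q.2}) (nhds 0)) :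
    Tendsto
      (fun q : ℝ × ℝ =>
        υl - ρs q * (p q.1 q.2 (ρs q) - p q.1 q.2 ρl) / (ρs q - ρl))
      (nhdsWithin (0, 0) {q : ℝ × ℝ | 0 < q.1 ∧ 0 < q.2}) (nhds υr) :=
  shock_speed_limit_general ρl υl υr p ρs hρs hblow
end

section
/- Suppose υ_l ≤ υ_r and for each (a, A) the intermediate density ρ_*(a, A) ∈ (0, ρ_l) satisfies υ_r = -p(ρ_*) + υ_l + p(ρ_l). Then ρ_*(a, A) does not tend to 0 as (a, A) → (0, 0); i.e., no vacuum forms in the limit. -/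
open Real Set Filter

theorem no_vacuum_in_limit
    (B Γ κ ρl υl υr : ℝ) (hB : 0 < B) (hΓ : 1 ≤ Γ ∧ Γ ≤ 3) (hκ : 0 < κ ∧ κ ≤ 1)
    (hρl : 0 < ρl) (h1 : υl ≤ υr)
    (p : ℝ → ℝ → ℝ → ℝ)
    (hp : ∀ a A ρ : ℝ, p a A ρ = A * (ρ / (1 - a * ρ)) ^ Γ - B / ρ ^ κ)
    (ρs : ℝ × ℝ → ℝ)
    (hρs : ∀ q : ℝ × ℝ, 0 < q.1 → 0 < q.2 →
      0 < ρs q ∧ ρs q < ρl ∧ υr = -p q.1 q.2 (ρs q) + υl + p q.1 q.2 ρl) :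
    ¬ Tendsto ρs (nhdsWithin (0, 0) {q : ℝ × ℝ | 0 < q.1 ∧ 0 < q.2}) (nhds 0) := by
  intro ht
  set S : Set (ℝ × ℝ) := {q : ℝ × ℝ | 0 < q.1 ∧ 0 < q.2} with hS
  set F := nhdsWithin ((0, 0) : ℝ × ℝ) S with hF
  -- the filter is nontrivial
  have hSeq : S = Ioi (0:ℝ) ×ˢ Ioi (0:ℝ) := by
    ext q; simp [hS, Set.mem_prod]
  haveI : F.NeBot := by
    rw [hF]
    apply mem_closure_iff_nhdsWithin_neBot.mp
    rw [hSeq, closure_prod_eq, closure_Ioi]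
    simp
  -- constants
  set M : ℝ := (max 1 (2 * ρl)) ^ (3:ℝ) with hM
  have hM1 : (1:ℝ) ≤ M := by
    rw [hM]
    calc (1:ℝ) = 1 ^ (3:ℝ) := by simp
    _ ≤ (max 1 (2 * ρl)) ^ (3:ℝ) :=
      Real.rpow_le_rpow zero_le_one (le_max_left _ _) (by norm_num)
  have hρlκ : (0:ℝ) < ρl ^ κ := Real.rpow_pos_of_pos hρl κ
  set C : ℝ := (υr - υl) + B / ρl ^ κ + M + 1 with hC
  have hCpos : 0 < C := by
    have h3 : 0 < B / ρl ^ κ := div_pos hB hρlκ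
    have h2 : 0 ≤ υr - υl := by linarith
    rw [hC]; linarith
  set δ : ℝ := (B / C) ^ (1 / κ) with hδ
  have hBC : 0 < B / C := div_pos hB hCpos
  have hδpos : 0 < δ := Real.rpow_pos_of_pos hBC _
  -- eventual facts
  have hfst : Tendsto (fun q : ℝ × ℝ => q.1) F (nhds 0) :=
    (continuous_fst.tendsto ((0,0) : ℝ × ℝ)).mono_left nhdsWithin_le_nhds
  have hsnd : Tendsto (fun q : ℝ × ℝ => q.2) F (nhds 0) :=
    (continuous_snd.tendsto ((0,0) : ℝ × ℝ)).mono_left nhdsWithin_le_nhds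
  have ha : ∀ᶠ q : ℝ × ℝ in F, q.1 < 1 / (2 * ρl) :=
    hfst.eventually (gt_mem_nhds (by positivity))
  have hAev : ∀ᶠ q : ℝ × ℝ in F, q.2 < 1 :=
    hsnd.eventually (gt_mem_nhds one_pos)
  have hρev : ∀ᶠ q : ℝ × ℝ in F, ρs q < δ :=
    ht.eventually (gt_mem_nhds hδpos)
  have hmem : ∀ᶠ q : ℝ × ℝ in F, 0 < q.1 ∧ 0 < q.2 := eventually_mem_nhdsWithin
  obtain ⟨q, ⟨hq1, hq2⟩, haq, hAq, hρq⟩ :=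
    (hmem.and (ha.and (hAev.and hρev))).exists
  obtain ⟨hρ0, hρlt, heq⟩ := hρs q hq1 hq2
  rw [hp, hp] at heq
  set a := q.1
  set A := q.2
  set ρ := ρs q
  -- basic bounds
  have hhalf : (1 / (2 * ρl)) * ρl = 1 / 2 := by
    field_simp
  have haρl : a * ρl < 1 / 2 := by
    have h := mul_lt_mul_of_pos_right haq hρl
    linarith
  have haρ : a * ρ < 1 / 2 := by
    have h : a * ρ < a * ρl := by nlinarith
    linarith
  have hden : (1:ℝ)/2 < 1 - a * ρ := by linarith
  have hdenl : (1:ℝ)/2 < 1 - a * ρl := by linarith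
  -- bound on the rpow terms
  have hx : ρ / (1 - a * ρ) ≤ 2 * ρl := by
    rw [div_le_iff₀ (by linarith)]
    nlinarith
  have hxpos : 0 ≤ ρ / (1 - a * ρ) := by positivity
  have hxΓ : (ρ / (1 - a * ρ)) ^ Γ ≤ M := by
    calc (ρ / (1 - a * ρ)) ^ Γ ≤ (max 1 (2 * ρl)) ^ Γ :=
          Real.rpow_le_rpow hxpos (le_trans hx (le_max_right _ _)) (by linarith [hΓ.1])
    _ ≤ (max 1 (2 * ρl)) ^ (3:ℝ) :=
          Real.rpow_le_rpow_of_exponent_le (le_max_left _ _) hΓ.2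
  have hterm1 : A * (ρ / (1 - a * ρ)) ^ Γ ≤ M := by
    have h0 : 0 ≤ (ρ / (1 - a * ρ)) ^ Γ := Real.rpow_nonneg hxpos _
    nlinarith
  have hterm2 : 0 ≤ A * (ρl / (1 - a * ρl)) ^ Γ := by
    have : 0 ≤ ρl / (1 - a * ρl) := by positivity
    exact mul_nonneg (le_of_lt hq2) (Real.rpow_nonneg this _)
  -- the key lower bound: B / ρ^κ > C
  have hρκ : ρ ^ κ < B / C := by
    have h2 : ρ ^ κ < δ ^ κ := Real.rpow_lt_rpow (le_of_lt hρ0) hρq hκ.1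
    have h3 : δ ^ κ = B / C := by
      rw [hδ, ← Real.rpow_mul (le_of_lt hBC), one_div,
        inv_mul_cancel₀ (ne_of_gt hκ.1), Real.rpow_one]
    rw [h3] at h2; exact h2
  have hρκpos : 0 < ρ ^ κ := Real.rpow_pos_of_pos hρ0 κ
  have hkey : C < B / ρ ^ κ := by
    have h4 := div_lt_div_of_pos_left hB hρκpos hρκ
    have h5 : B / (B / C) = C := by
      field_simp
    rwa [h5] at h4
  -- assemble contradiction
  linarith [heq, hkey, hterm1, hterm2, hC]
end
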